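/- Assume p ≥ 5. Let e ≥ 0 be an integer, q = p^e, and define φ*(t) = [[1, t^q, (1/2)t^{2q}, (1/6)t^{3q}], [0, 1, t^q, (1/2)t^{2q}], [0, 0, 1, t^q], [0, 0, 0, 1]] for t ∈ k and ω*(u) = diag(u^{3q}, u^{q}, u^{−q}, u^{−3q}) for u ∈ kˣ. Suppose φ⁻ : k → SL(4,k) satisfies: φ⁻(s+s') = φ⁻(s)·φ⁻(s') for all s,s' ∈ k; every matrix entry of φ⁻(s) is a polynomial function of s; φ⁻(s) is lower triangular for every s ∈ k; and φ*(t)·φ⁻(s) = φ⁻(s/(1+t·s)) · ω*(1+t·s) · φ*(t/(1+t·s)) for all t,s ∈ k with 1+t·s ≠ 0. Then φ⁻(s) = [[1,0,0,0], [3s^q, 1, 0, 0], [6s^{2q}, 4s^q, 1, 0], [6s^{3q}, 6s^{2q}, 3s^q, 1]] for every s ∈ k. -/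

import Mathlib

/-! The diagonal entries of `φ⁻` are polynomial homomorphisms `(k, +) → (k, ·)` taking the
value `1` at `0`; having no roots over the algebraically closed `k`, they are constantly `1`.
Hence `φ⁻(s)` and `φ⁻(s / (1 + ts))` are lower unitriangular, and row `0` of the relation
reads, with `u = 1 + ts` and `u^q = 1 + t^q s^q` (Frobenius),
`(1, t^q, t^{2q}/2, t^{3q}/6) · φ⁻(s) = (u^{3q}, u^{2q} t^q, u^q t^{2q}/2, t^{3q}/6)`.
Both sides are polynomials in `t` that agree away from `t = -1/s`, so comparing the
coefficients of `t^q`, `t^{2q}`, `t^{3q}` determines the six entries below the diagonal;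
`p ≥ 5` is what makes `2` and `6` invertible. -/

open Matrix

/-- The unipotent one-parameter subgroup `φ*` of form (I). -/
noncomputable def phiStarI (k : Type*) [Field k] (q : ℕ) (t : k) : Matrix (Fin 4) (Fin 4) k :=
  !![1, t ^ q, (1 / 2 : k) * t ^ (2 * q), (1 / 6 : k) * t ^ (3 * q);
     0, 1, t ^ q, (1 / 2 : k) * t ^ (2 * q);
     0, 0, 1, t ^ q;
     0, 0, 0, 1]

/-- The cocharacter `ω*(u) = diag(u^{3q}, u^{q}, u^{−q}, u^{−3q})` of form (I). -/
noncomputable def omegaStarI (k : Type*) [Field k] (q : ℕ) (u : kˣ) :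
    Matrix (Fin 4) (Fin 4) k :=
  Matrix.diagonal
    ![(u : k) ^ (3 * q : ℤ), (u : k) ^ (q : ℤ), (u : k) ^ (-(q : ℤ)), (u : k) ^ (-(3 * q : ℤ))]

open Polynomial

theorem Polynomial.eq_zero_of_forall_ne_eval_eq_zero {R : Type*} [CommRing R] [IsDomain R]
    [Infinite R] {P : R[X]} (a : R) (h : ∀ t, t ≠ a → P.eval t = 0) : P = 0 :=
  P.eq_zero_of_infinite_isRoot <| (Set.finite_singleton a).infinite_compl.mono h

theorem coeffs_eq_zero_of_forall_ne {R : Type*} [CommRing R] [IsDomain R] [Infinite R]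
    {q : ℕ} (hq : q ≠ 0) {a₁ a₂ a₃ : R} (t₀ : R)
    (h : ∀ t, t ≠ t₀ → a₁ * t ^ q + a₂ * t ^ (2 * q) + a₃ * t ^ (3 * q) = 0) :
    a₁ = 0 ∧ a₂ = 0 ∧ a₃ = 0 := by
  set P : R[X] := C a₁ * X ^ q + C a₂ * X ^ (2 * q) + C a₃ * X ^ (3 * q)
  have hP : P = 0 := Polynomial.eq_zero_of_forall_ne_eval_eq_zero t₀ fun t ht => by
    simpa [P] using h t ht
  have hcoeff (n : ℕ) : P.coeff n = 0 := by rw [hP, coeff_zero]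
  refine ⟨?_, ?_, ?_⟩
  · simpa [P, coeff_X_pow, show q ≠ 2 * q by omega, show q ≠ 3 * q by omega] using hcoeff q
  · simpa [P, coeff_X_pow, show 2 * q ≠ q by omega, show 2 * q ≠ 3 * q by omega]
      using hcoeff (2 * q)
  · simpa [P, coeff_X_pow, show 3 * q ≠ q by omega, show 3 * q ≠ 2 * q by omega]
      using hcoeff (3 * q)

theorem eq_one_of_map_add_of_eq_eval {k : Type*} [Field k] [IsAlgClosed k] {f : k → k}
    (hf : ∀ x y, f (x + y) = f x * f y) (hf0 : f 0 = 1) {P : k[X]} (hP : ∀ x, f x = P.eval x)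
    (x : k) : f x = 1 := by
  have hroot : ∀ y, ¬ P.IsRoot y := fun y hy => by
    have := hf y (-y)
    rw [add_neg_cancel, hf0, hP y, hy, zero_mul] at this
    exact one_ne_zero this
  have hdeg : P.degree ≤ 0 := by
    by_contra! hpos
    exact (IsAlgClosed.exists_root P hpos.ne').elim hroot
  have hconst : P.eval x = P.eval 0 := by
    rw [eq_C_of_degree_le_zero hdeg, eval_C, eval_C]
  rw [hP, hconst, ← hP, hf0]

theorem Matrix.mul_apply_self_of_lower_triangular {n R : Type*} [Fintype n] [LinearOrder n]
    [NonUnitalNonAssocSemiring R] {A B : Matrix n n R} (hA : ∀ i j, i < j → A i j = 0)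
    (hB : ∀ i j, i < j → B i j = 0) (i : n) : (A * B) i i = A i i * B i i := by
  rw [mul_apply, Finset.sum_eq_single i]
  · intro j _ hj
    rcases hj.lt_or_gt with hji | hij
    · rw [hB j i hji, mul_zero]
    · rw [hA i j hij, zero_mul]
  · simp

theorem Matrix.mul_apply_zero_of_unitriangular {m R : Type*} [NonAssocSemiring R] {l : ℕ}
    {M : Matrix (Fin (l + 1)) (Fin (l + 1)) R} (hM : ∀ i j, i < j → M i j = 0) (hM0 : M 0 0 = 1)
    (N : Matrix (Fin (l + 1)) m R) (j : m) : (M * N) 0 j = N 0 j := by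
  simp [mul_apply, Fin.sum_univ_succ, hM0, hM 0 _ (Fin.succ_pos _)]

theorem phiStarI_mul_apply_zero {k : Type*} [Field k] (q : ℕ) (t : k)
    (M : Matrix (Fin 4) (Fin 4) k) (j : Fin 4) :
    (phiStarI k q t * M) 0 j =
      M 0 j + t ^ q * M 1 j + 1 / 2 * t ^ (2 * q) * M 2 j + 1 / 6 * t ^ (3 * q) * M 3 j := by
  simp [phiStarI, mul_apply, Fin.sum_univ_four, mul_assoc]

theorem omegaStarI_mul_apply_zero {k : Type*} [Field k] (q : ℕ) (u : kˣ)
    (N : Matrix (Fin 4) (Fin 4) k) (j : Fin 4) :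
    (omegaStarI k q u * N) 0 j = (u : k) ^ (3 * q) * N 0 j := by
  rw [omegaStarI, diagonal_mul, cons_val_zero]
  norm_cast

theorem row_zero_identities_of_phiStarI_mul_eq {k : Type*} [Field k] {p : ℕ} [Fact p.Prime]
    [CharP k p] (h2 : (2 : k) ≠ 0) (h6 : (6 : k) ≠ 0) (e : ℕ) {M N : Matrix (Fin 4) (Fin 4) k}
    (hM : ∀ i j, i < j → M i j = 0) (hMd : ∀ i, M i i = 1)
    (hN : ∀ i j, i < j → N i j = 0) (hN0 : N 0 0 = 1) {t s : k} (h : 1 + t * s ≠ 0)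
    (hrel : phiStarI k (p ^ e) t * M =
      N * omegaStarI k (p ^ e) (Units.mk0 (1 + t * s) h) * phiStarI k (p ^ e) (t / (1 + t * s))) :
    (M 1 0 - 3 * s ^ p ^ e) * t ^ p ^ e + (M 2 0 - 6 * s ^ (2 * p ^ e)) / 2 * t ^ (2 * p ^ e) +
        (M 3 0 - 6 * s ^ (3 * p ^ e)) / 6 * t ^ (3 * p ^ e) = 0 ∧
      0 * t ^ p ^ e + (M 2 1 - 4 * s ^ p ^ e) / 2 * t ^ (2 * p ^ e) +
        (M 3 1 - 6 * s ^ (2 * p ^ e)) / 6 * t ^ (3 * p ^ e) = 0 ∧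
      0 * t ^ p ^ e + 0 * t ^ (2 * p ^ e) + (M 3 2 - 3 * s ^ p ^ e) / 6 * t ^ (3 * p ^ e) = 0 := by
  set q := p ^ e
  have hfrob : (1 + t * s) ^ q = 1 + t ^ q * s ^ q := by rw [add_pow_char_pow, one_pow, mul_pow]
  have hrow (j : Fin 4) : ((1 + t * s) ^ q) ^ 3 * phiStarI k q (t / (1 + t * s)) 0 j =
      M 0 j + t ^ q * M 1 j + 1 / 2 * t ^ (2 * q) * M 2 j + 1 / 6 * t ^ (3 * q) * M 3 j := by
    rw [← phiStarI_mul_apply_zero, hrel, mul_assoc, mul_apply_zero_of_unitriangular hN hN0,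
      omegaStarI_mul_apply_zero, Units.val_mk0, ← pow_mul, mul_comm q]
  have entry0 := hrow 0
  have entry1 := hrow 1
  have entry2 := hrow 2
  have hU : 1 + t ^ q * s ^ q ≠ 0 := hfrob ▸ pow_ne_zero q h
  simp [phiStarI, hMd, hM 0 1 (by decide), hM 0 2 (by decide), hM 1 2 (by decide), pow_mul',
    div_pow, hfrob] at entry0 entry1 entry2
  simp only [pow_mul']
  refine ⟨?_, ?_, ?_⟩
  · linear_combination (norm := (field_simp; ring)) -entry0
  · linear_combination (norm := (field_simp; ring)) -entry1
  · linear_combination (norm := (field_simp; ring)) -entry2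

theorem one_add_mul_ne_zero_of_ne_neg_inv {k : Type*} [Field k] {s t : k} (ht : t ≠ -s⁻¹) :
    1 + t * s ≠ 0 := by
  intro h
  have hs : s ≠ 0 := by rintro rfl; simp at h
  exact ht (by field_simp; linear_combination h)

theorem stmt5 {k : Type*} [Field k] [IsAlgClosed k] {p : ℕ} [Fact p.Prime] [CharP k p]
    (hp : 5 ≤ p) (e : ℕ)
    (φm : k → SpecialLinearGroup (Fin 4) k)
    (hadd : ∀ s s' : k, φm (s + s') = φm s * φm s')
    (hpoly : ∀ i j : Fin 4, ∃ P : Polynomial k, ∀ s : k, (φm s).1 i j = P.eval s)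
    (htri : ∀ (s : k) (i j : Fin 4), i < j → (φm s).1 i j = 0)
    (hrel : ∀ (t s : k) (h : 1 + t * s ≠ 0),
      phiStarI k (p ^ e) t * (φm s).1 =
        (φm (s / (1 + t * s))).1 * omegaStarI k (p ^ e) (Units.mk0 (1 + t * s) h) *
          phiStarI k (p ^ e) (t / (1 + t * s))) :
    ∀ s : k, (φm s).1 =
      !![1, 0, 0, 0;
         (3 : k) * s ^ p ^ e, 1, 0, 0;
         (6 : k) * s ^ (2 * p ^ e), (4 : k) * s ^ p ^ e, 1, 0;
         (6 : k) * s ^ (3 * p ^ e), (6 : k) * s ^ (2 * p ^ e), (3 : k) * s ^ p ^ e, 1] := by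
  have h2 : (2 : k) ≠ 0 := by
    exact_mod_cast CharP.cast_ne_zero_of_ne_of_prime k Nat.prime_two (by omega)
  have h3 : (3 : k) ≠ 0 := by
    exact_mod_cast CharP.cast_ne_zero_of_ne_of_prime k Nat.prime_three (by omega)
  have h6 : (6 : k) ≠ 0 := by simpa [show (6 : k) = 2 * 3 by norm_num] using ⟨h2, h3⟩
  have hone : φm 0 = 1 := by simpa using hadd 0 0
  have hdiag (s : k) (i : Fin 4) : (φm s).1 i i = 1 :=
    eq_one_of_map_add_of_eq_eval (f := fun s => (φm s).1 i i)
      (fun x y => by rw [hadd]; exact mul_apply_self_of_lower_triangular (htri x) (htri y) i)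
      (by simp [hone]) (hpoly i i).choose_spec s
  intro s
  have hrows (t : k) (ht : t ≠ -s⁻¹) :=
    row_zero_identities_of_phiStarI_mul_eq h2 h6 e (htri s) (hdiag s) (htri _) (hdiag _ 0) _
      (hrel t s (one_add_mul_ne_zero_of_ne_neg_inv ht))
  have hq : p ^ e ≠ 0 := pow_ne_zero e (by omega)
  obtain ⟨h10, h20, h30⟩ := coeffs_eq_zero_of_forall_ne hq _ fun t ht => (hrows t ht).1
  obtain ⟨-, h21, h31⟩ := coeffs_eq_zero_of_forall_ne hq _ fun t ht => (hrows t ht).2.1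
  obtain ⟨-, -, h32⟩ := coeffs_eq_zero_of_forall_ne hq _ fun t ht => (hrows t ht).2.2
  simp only [div_eq_zero_iff, h2, h6, or_false, sub_eq_zero] at h10 h20 h30 h21 h31 h32
  ext i j
  fin_cases i <;> fin_cases j <;> simp [hdiag, htri, h10, h20, h30, h21, h31, h32]
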